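/- arXiv:1902.04853 — 2 statements merged into one kernel-verified Lean document; each statement's English description precedes it below -/
import Mathlib

section
/- Let r > 1 and δ ≥ 0. Define T on symmetric real 3×3 matrices by T(D) = ((|D| − δ)⁺/|D|) (1 + |D|²)^{(r−2)/2} D for D ≠ O and T(O) = O. Then T is monotone: (T(D₁) − T(D₂)) : (D₁ − D₂) ≥ 0 for all symmetric real 3×3 matrices D₁, D₂. -/
/-!
`T D = φ(|D|) D` is radial, and for a radial map with `φ ≥ 0` Cauchy–Schwarz gives
`(φ(|x|) x - φ(|y|) y) : (x - y) ≥ (φ(|x|)|x| - φ(|y|)|y|)(|x| - |y|)`, so monotonicity of `T`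
reduces to monotonicity of the scalar function `g(t) = (t - δ)⁺ (1 + t²)^((r-2)/2)`.
For `r ≥ 2` both factors of `g` increase. For `1 < r < 2`, on `t > δ` we write
`g(t) = (t - δ)^(r-1) · ((t - δ)² / (1 + t²))^((2-r)/2)`, and `(t - δ)² / (1 + t²)` increases
on `t ≥ δ ≥ 0`.
-/

/-- Frobenius norm of a real 3×3 matrix: `|A|² = tr(A²)` for symmetric `A`. -/
noncomputable def frobNorm (A : Matrix (Fin 3) (Fin 3) ℝ) : ℝ :=
  Real.sqrt (∑ i, ∑ j, (A i j) ^ 2)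

/-- Entrywise product `A : B = Σᵢⱼ Aᵢⱼ Bᵢⱼ`. -/
def mdot (A B : Matrix (Fin 3) (Fin 3) ℝ) : ℝ := ∑ i, ∑ j, A i j * B i j

open Set Real RealInnerProductSpace

theorem monotoneOn_sub_sq_div_one_add_sq {δ : ℝ} (hδ : 0 ≤ δ) :
    MonotoneOn (fun t : ℝ => (t - δ) ^ 2 / (1 + t ^ 2)) (Ici δ) := by
  intro b hb a ha hab
  simp only [mem_Ici] at ha hb
  rw [div_le_div_iff₀ (by positivity) (by positivity)]
  have hcross : (b - δ) * a ≤ (a - δ) * b := by nlinarith [mul_nonneg hδ (sub_nonneg.2 hab)]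
  have hcross_sq : ((b - δ) * a) ^ 2 ≤ ((a - δ) * b) ^ 2 :=
    pow_le_pow_left₀ (by nlinarith) hcross 2
  nlinarith [sq_nonneg (a - δ), sq_nonneg (b - δ)]

theorem monotoneOn_sub_mul_one_add_sq_rpow {r δ : ℝ} (hr : 1 < r) (hδ : 0 ≤ δ) :
    MonotoneOn (fun t : ℝ => (t - δ) * (1 + t ^ 2) ^ ((r - 2) / 2)) (Ioi δ) := by
  rcases le_or_gt 2 r with hr2 | hr2
  · refine MonotoneOn.mul (fun b _ a _ hab => by linarith) (fun b hb a ha hab => ?_)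
      (fun t ht => by linarith [mem_Ioi.1 ht]) (fun t _ => by positivity)
    have hb : δ < b := hb
    exact rpow_le_rpow (by positivity) (by nlinarith) (by linarith)
  · have hsplit : EqOn
        (fun t : ℝ => (t - δ) ^ (r - 1) * ((t - δ) ^ 2 / (1 + t ^ 2)) ^ ((2 - r) / 2))
        (fun t => (t - δ) * (1 + t ^ 2) ^ ((r - 2) / 2)) (Ioi δ) := by
      intro t ht
      have hs : 0 < t - δ := sub_pos.2 ht
      have hu : 0 < 1 + t ^ 2 := by positivity
      dsimp only
      rw [div_rpow (by positivity) hu.le, ← rpow_natCast, ← rpow_mul hs.le, ← mul_div_assoc,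
        ← rpow_add hs, div_eq_mul_inv, ← rpow_neg hu.le,
        show r - 1 + ((2 : ℕ) : ℝ) * ((2 - r) / 2) = 1 by push_cast; ring, rpow_one,
        show -((2 - r) / 2) = (r - 2) / 2 by ring]
    refine MonotoneOn.congr (MonotoneOn.mul (fun b hb a ha hab => ?_) (fun b hb a ha hab => ?_)
      (fun t ht => rpow_nonneg (sub_pos.2 ht).le _) (fun t _ => by positivity)) hsplit
    · exact rpow_le_rpow (by linarith [mem_Ioi.1 hb]) (by linarith) (by linarith)
    · exact rpow_le_rpow (by positivity)
        (monotoneOn_sub_sq_div_one_add_sq hδ (mem_Ioi.1 hb).le (mem_Ioi.1 ha).le hab) (by linarith)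

theorem monotone_max_sub_mul_one_add_sq_rpow {r δ : ℝ} (hr : 1 < r) (hδ : 0 ≤ δ) :
    Monotone (fun t : ℝ => max (t - δ) 0 * (1 + t ^ 2) ^ ((r - 2) / 2)) := by
  intro b a hab
  dsimp only
  rcases le_or_gt b δ with hb | hb
  · rw [max_eq_right (by linarith), zero_mul]
    exact mul_nonneg (le_max_right _ _) (rpow_nonneg (by positivity) _)
  · have ha : δ < a := hb.trans_le hab
    simp only [max_eq_left (sub_pos.2 hb).le, max_eq_left (sub_pos.2 ha).le]
    exact monotoneOn_sub_mul_one_add_sq_rpow hr hδ hb ha hab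

theorem inner_smul_norm_sub_smul_norm_nonneg {E : Type*} [NormedAddCommGroup E]
    [InnerProductSpace ℝ E] {φ : ℝ → ℝ} (hφ : ∀ t, 0 ≤ t → 0 ≤ φ t)
    (hmono : MonotoneOn (fun t => φ t * t) (Ici 0)) (x y : E) :
    0 ≤ ⟪φ ‖x‖ • x - φ ‖y‖ • y, x - y⟫ := by
  set a := ‖x‖
  set b := ‖y‖
  have hcs : ⟪x, y⟫ ≤ a * b := real_inner_le_norm x y
  have hexpand :
      ⟪φ a • x - φ b • y, x - y⟫ = φ a * a ^ 2 + φ b * b ^ 2 - (φ a + φ b) * ⟪x, y⟫ := by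
    simp only [inner_sub_left, inner_sub_right, real_inner_smul_left, real_inner_self_eq_norm_sq,
      real_inner_comm x y]
    ring
  have hradial : 0 ≤ (φ a * a - φ b * b) * (a - b) := by
    rcases le_total b a with h | h
    · exact mul_nonneg (sub_nonneg.2 (hmono (norm_nonneg y) (norm_nonneg x) h)) (sub_nonneg.2 h)
    · exact mul_nonneg_of_nonpos_of_nonpos
        (sub_nonpos.2 (hmono (norm_nonneg x) (norm_nonneg y) h)) (sub_nonpos.2 h)
  rw [hexpand]
  have hφab : 0 ≤ φ a + φ b := add_nonneg (hφ a (norm_nonneg x)) (hφ b (norm_nonneg y))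
  nlinarith [mul_le_mul_of_nonneg_left hcs hφab]

/-- Matrices carry no inner product in Mathlib; flattening into `EuclideanSpace` realises the
Frobenius one. -/
def Matrix.toEuclidean {m n : Type*} (A : Matrix m n ℝ) : EuclideanSpace ℝ (m × n) :=
  WithLp.toLp 2 fun p => A p.1 p.2

theorem mdot_eq_inner (A B : Matrix (Fin 3) (Fin 3) ℝ) :
    mdot A B = ⟪A.toEuclidean, B.toEuclidean⟫ := by
  simp [mdot, Matrix.toEuclidean, PiLp.inner_apply, Fintype.sum_prod_type, mul_comm]

theorem frobNorm_eq_norm (A : Matrix (Fin 3) (Fin 3) ℝ) : frobNorm A = ‖A.toEuclidean‖ := by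
  simp [frobNorm, Matrix.toEuclidean, EuclideanSpace.norm_eq, Fintype.sum_prod_type]

theorem Matrix.toEuclidean_smul_sub_smul {m n : Type*} (c e : ℝ) (A B : Matrix m n ℝ) :
    (c • A - e • B).toEuclidean = c • A.toEuclidean - e • B.toEuclidean := rfl

theorem statement13_general (r δ : ℝ) (hr : 1 < r) (hδ : 0 ≤ δ)
    (T : Matrix (Fin 3) (Fin 3) ℝ → Matrix (Fin 3) (Fin 3) ℝ)
    (hT : ∀ D, T D = ((max (frobNorm D - δ) 0 / frobNorm D)
      * (1 + frobNorm D ^ 2) ^ ((r - 2) / 2)) • D)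
    (D₁ D₂ : Matrix (Fin 3) (Fin 3) ℝ) :
    0 ≤ mdot (T D₁ - T D₂) (D₁ - D₂) := by
  set φ : ℝ → ℝ := fun t => max (t - δ) 0 / t * (1 + t ^ 2) ^ ((r - 2) / 2)
  have hφ : ∀ t, 0 ≤ t → 0 ≤ φ t := fun t ht => by
    have := le_max_right (t - δ) 0
    positivity
  have hφt : EqOn (fun t => max (t - δ) 0 * (1 + t ^ 2) ^ ((r - 2) / 2)) (fun t => φ t * t)
      (Ici 0) := by
    intro t ht
    rcases (mem_Ici.1 ht).eq_or_lt with rfl | ht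
    · simp [hδ]
    · simp only [φ]
      field_simp
  have h := inner_smul_norm_sub_smul_norm_nonneg hφ
    (((monotone_max_sub_mul_one_add_sq_rpow hr hδ).monotoneOn _).congr hφt)
    D₁.toEuclidean D₂.toEuclidean
  rwa [hT, hT, mdot_eq_inner, Matrix.toEuclidean_smul_sub_smul, frobNorm_eq_norm, frobNorm_eq_norm]

/-- The constitutive function of the activated fluid with factor
`𝒮(d) = (1+d²)^{(r−2)/2}` is monotone.  (Note that the defining formula
automatically gives `T O = O` since the scalar multiplies the zero matrix.) -/
theorem statement13 (r δ : ℝ) (hr : 1 < r) (hδ : 0 ≤ δ)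
    (T : Matrix (Fin 3) (Fin 3) ℝ → Matrix (Fin 3) (Fin 3) ℝ)
    (hT : ∀ D, T D = ((max (frobNorm D - δ) 0 / frobNorm D)
      * (1 + frobNorm D ^ 2) ^ ((r - 2) / 2)) • D)
    (D₁ D₂ : Matrix (Fin 3) (Fin 3) ℝ) (h₁ : D₁.IsSymm) (h₂ : D₂.IsSymm) :
    0 ≤ mdot (T D₁ - T D₂) (D₁ - D₂) :=
  statement13_general r δ hr hδ T hT D₁ D₂
end

section
/- Let r > 1 and δ ≥ 0, and define T on symmetric real 3×3 matrices by T(D̃) = ((|D̃| − δ)⁺/|D̃|) (1 + |D̃|²)^{(r−2)/2} D̃ for D̃ ≠ O and T(O) = O. Suppose symmetric real 3×3 matrices S and D satisfy (S − T(D̃)) : (D − D̃) ≥ 0 for every symmetric real 3×3 matrix D̃. Then S = T(D). In other words, the graph G = { (T(D), D) : D symmetric } is maximal monotone. -/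
open Filter Topology

lemma mdot_sub_left (A B C : Matrix (Fin 3) (Fin 3) ℝ) :
    mdot (A - B) C = mdot A C - mdot B C := by
  simp [mdot, Matrix.sub_apply, sub_mul, Finset.sum_sub_distrib]

lemma mdot_add_left (A B C : Matrix (Fin 3) (Fin 3) ℝ) :
    mdot (A + B) C = mdot A C + mdot B C := by
  simp [mdot, Matrix.add_apply, add_mul, Finset.sum_add_distrib]

lemma mdot_smul_left (c : ℝ) (A B : Matrix (Fin 3) (Fin 3) ℝ) :
    mdot (c • A) B = c * mdot A B := by
  simp [mdot, Matrix.smul_apply, smul_eq_mul, Finset.mul_sum, mul_assoc]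

lemma mdot_smul_right (c : ℝ) (A B : Matrix (Fin 3) (Fin 3) ℝ) :
    mdot A (c • B) = c * mdot A B := by
  simp [mdot, Matrix.smul_apply, smul_eq_mul, Finset.mul_sum, mul_left_comm]

lemma mdot_zero_left (B : Matrix (Fin 3) (Fin 3) ℝ) : mdot 0 B = 0 := by
  simp [mdot]

lemma frobNorm_nonneg (A : Matrix (Fin 3) (Fin 3) ℝ) : 0 ≤ frobNorm A :=
  Real.sqrt_nonneg _

lemma frobNorm_pos {A : Matrix (Fin 3) (Fin 3) ℝ} (h : A ≠ 0) : 0 < frobNorm A := by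
  apply Real.sqrt_pos.mpr
  obtain ⟨i, j, hij⟩ : ∃ i j, A i j ≠ 0 := by
    by_contra hc
    push_neg at hc
    exact h (by ext i j; simp [hc])
  have h1 : 0 < (A i j) ^ 2 := by positivity
  calc (0:ℝ) < (A i j) ^ 2 := h1
    _ ≤ ∑ j', (A i j') ^ 2 :=
        Finset.single_le_sum (f := fun j' => A i j' ^ 2)
          (fun _ _ => sq_nonneg _) (Finset.mem_univ j)
    _ ≤ ∑ i', ∑ j', (A i' j') ^ 2 :=
        Finset.single_le_sum (f := fun i' => ∑ j', (A i' j') ^ 2)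
          (fun _ _ => Finset.sum_nonneg fun _ _ => sq_nonneg _) (Finset.mem_univ i)

/-- the norm along the line `D + t E`. -/
noncomputable def nfun (D E : Matrix (Fin 3) (Fin 3) ℝ) (t : ℝ) : ℝ :=
  frobNorm (D + t • E)

/-- the scalar factor along the line `D + t E`. -/
noncomputable def cfun (r δ : ℝ) (D E : Matrix (Fin 3) (Fin 3) ℝ) (t : ℝ) : ℝ :=
  max (nfun D E t - δ) 0 / nfun D E t * (1 + nfun D E t ^ 2) ^ ((r - 2) / 2)

lemma nfun_cont (D E : Matrix (Fin 3) (Fin 3) ℝ) : Continuous (nfun D E) := by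
  unfold nfun frobNorm
  apply Real.continuous_sqrt.comp
  apply continuous_finset_sum
  intro i _
  apply continuous_finset_sum
  intro j _
  simp only [Matrix.add_apply, Matrix.smul_apply, smul_eq_mul]
  fun_prop

lemma nfun_nonneg (D E : Matrix (Fin 3) (Fin 3) ℝ) (t : ℝ) : 0 ≤ nfun D E t :=
  frobNorm_nonneg _

lemma ratio_le_one {x δ : ℝ} (hx : 0 ≤ x) (hδ : 0 ≤ δ) : max (x - δ) 0 / x ≤ 1 := by
  rcases hx.eq_or_lt with h | h
  · rw [← h, div_zero]; norm_num
  · rw [div_le_one h]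
    exact max_le (by linarith) h.le

lemma cfun_nonneg (r δ : ℝ) (D E : Matrix (Fin 3) (Fin 3) ℝ) (t : ℝ) :
    0 ≤ cfun r δ D E t :=
  mul_nonneg (div_nonneg (le_max_right _ _) (nfun_nonneg D E t))
    (Real.rpow_nonneg (by positivity) _)

lemma cfun_le (r δ : ℝ) (hδ : 0 ≤ δ) (D E : Matrix (Fin 3) (Fin 3) ℝ) (t : ℝ) :
    cfun r δ D E t ≤ (1 + nfun D E t ^ 2) ^ ((r - 2) / 2) := by
  unfold cfun
  exact mul_le_of_le_one_left (Real.rpow_nonneg (by positivity) _)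
    (ratio_le_one (nfun_nonneg D E t) hδ)

/-- Maximality of the monotone graph `G = {(T(D), D)}` of the activated fluid
with factor `𝒮(d) = (1+d²)^{(r−2)/2}`: if `(S − T(D̃)) : (D − D̃) ≥ 0` for every
symmetric `D̃`, then `S = T(D)`.  (The defining formula automatically gives
`T O = O` since the scalar multiplies the zero matrix.) -/
theorem statement15 (r δ : ℝ) (hr : 1 < r) (hδ : 0 ≤ δ)
    (T : Matrix (Fin 3) (Fin 3) ℝ → Matrix (Fin 3) (Fin 3) ℝ)
    (hT : ∀ D, T D = ((max (frobNorm D - δ) 0 / frobNorm D)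
      * (1 + frobNorm D ^ 2) ^ ((r - 2) / 2)) • D)
    (S D : Matrix (Fin 3) (Fin 3) ℝ) (hSsym : S.IsSymm) (hDsym : D.IsSymm)
    (hmax : ∀ D' : Matrix (Fin 3) (Fin 3) ℝ, D'.IsSymm →
      0 ≤ mdot (S - T D') (D - D')) :
    S = T D := by
  set E : Matrix (Fin 3) (Fin 3) ℝ := S - T D with hEdef
  have hTDsym : (T D).IsSymm := by rw [hT D]; exact hDsym.smul _
  have hEsym : E.IsSymm := hSsym.sub hTDsym
  have hTt : ∀ t : ℝ, T (D + t • E) = cfun r δ D E t • (D + t • E) := by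
    intro t
    rw [hT]
    rfl
  have hf : ∀ t : ℝ, mdot (S - T (D + t • E)) E
      = mdot S E - cfun r δ D E t * (mdot D E + t * mdot E E) := by
    intro t
    rw [hTt t, mdot_sub_left, mdot_smul_left, mdot_add_left, mdot_smul_left]
  have hf0 : mdot E E = mdot S E - cfun r δ D E 0 * (mdot D E + 0 * mdot E E) := by
    have h := hf 0
    rw [show D + (0:ℝ) • E = D by simp] at h
    rw [← hEdef] at h
    exact h
  have hle : ∀ t : ℝ, 0 < t → mdot (S - T (D + t • E)) E ≤ 0 := by
    intro t ht
    have hsym : (D + t • E).IsSymm := hDsym.add (hEsym.smul t)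
    have h := hmax _ hsym
    have hsub : D - (D + t • E) = (-t) • E := by module
    rw [hsub, mdot_smul_right] at h
    nlinarith
  have hB : ContinuousAt (fun t : ℝ => (1 + nfun D E t ^ 2) ^ ((r - 2) / 2)) 0 := by
    apply ContinuousAt.rpow_const
    · exact continuousAt_const.add (((nfun_cont D E).continuousAt).pow 2)
    · left
      positivity
  have hkey : Tendsto (fun t : ℝ => mdot (S - T (D + t • E)) E) (𝓝[>] 0)
      (𝓝 (mdot E E)) := by
    have hrw : (fun t : ℝ => mdot (S - T (D + t • E)) E)
        = fun t => mdot S E - cfun r δ D E t * (mdot D E + t * mdot E E) := funext hf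
    rw [hrw]
    rw [show (𝓝 (mdot E E)) = 𝓝 (mdot S E - cfun r δ D E 0 * (mdot D E + 0 * mdot E E))
      from congrArg nhds hf0]
    by_cases hD : D = 0
    · subst hD
      have hm0 : mdot 0 E = 0 := mdot_zero_left E
      simp only [hm0, zero_add, zero_mul, mul_zero, sub_zero]
      have hg : Tendsto (fun t : ℝ => cfun r δ 0 E t * t) (𝓝[>] (0:ℝ)) (𝓝 0) := by
        have hub : Tendsto (fun t : ℝ => t * (1 + nfun 0 E t ^ 2) ^ ((r - 2) / 2))
            (𝓝[>] (0:ℝ)) (𝓝 0) := by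
          have h1 : ContinuousAt (fun t : ℝ => t * (1 + nfun 0 E t ^ 2) ^ ((r - 2) / 2)) 0 :=
            continuousAt_id.mul hB
          have h2 : Tendsto (fun t : ℝ => t * (1 + nfun 0 E t ^ 2) ^ ((r - 2) / 2))
              (𝓝[>] (0:ℝ)) (𝓝 ((0:ℝ) * (1 + nfun 0 E 0 ^ 2) ^ ((r - 2) / 2))) :=
            h1.continuousWithinAt
          simpa using h2
        apply squeeze_zero' ?_ ?_ hub
        · filter_upwards [self_mem_nhdsWithin] with t ht
          exact mul_nonneg (cfun_nonneg r δ 0 E t) (le_of_lt ht)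
        · filter_upwards [self_mem_nhdsWithin] with t ht
          rw [mul_comm]
          exact mul_le_mul_of_nonneg_left (cfun_le r δ hδ 0 E t) (le_of_lt ht)
      have h2 : Tendsto (fun t : ℝ => mdot S E - cfun r δ 0 E t * t * mdot E E)
          (𝓝[>] (0:ℝ)) (𝓝 (mdot S E - 0 * mdot E E)) :=
        tendsto_const_nhds.sub (hg.mul tendsto_const_nhds)
      rw [zero_mul, sub_zero] at h2
      exact h2.congr (fun t => by ring)
    · have hn0 : 0 < nfun D E 0 := by
        have h1 : nfun D E 0 = frobNorm D := by simp [nfun]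
        rw [h1]
        exact frobNorm_pos hD
      have hnC : ContinuousAt (nfun D E) 0 := (nfun_cont D E).continuousAt
      have hcC : ContinuousAt (cfun r δ D E) 0 := by
        exact (((hnC.sub continuousAt_const).max continuousAt_const).div hnC
          (ne_of_gt hn0)).mul hB
      have hfC : ContinuousAt
          (fun t : ℝ => mdot S E - cfun r δ D E t * (mdot D E + t * mdot E E)) 0 :=
        continuousAt_const.sub (hcC.mul (continuousAt_const.add
          (continuousAt_id.mul continuousAt_const)))
      exact hfC.continuousWithinAt
  have hlim : mdot E E ≤ 0 := by
    apply le_of_tendsto hkey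
    filter_upwards [self_mem_nhdsWithin] with t ht
    exact hle t ht
  have hsum : ∑ i, ∑ j, E i j * E i j = 0 := by
    have h1 : mdot E E = ∑ i, ∑ j, E i j * E i j := rfl
    rw [h1] at hlim
    have h2 : (0:ℝ) ≤ ∑ i, ∑ j, E i j * E i j :=
      Finset.sum_nonneg fun i _ => Finset.sum_nonneg fun j _ => mul_self_nonneg _
    linarith
  have hE0 : E = 0 := by
    ext i j
    have h2 := (Finset.sum_eq_zero_iff_of_nonneg
      (fun i _ => Finset.sum_nonneg fun j _ => mul_self_nonneg (E i j))).mp hsum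
    have h3 := (Finset.sum_eq_zero_iff_of_nonneg
      (fun j _ => mul_self_nonneg (E i j))).mp (h2 i (Finset.mem_univ i)) j (Finset.mem_univ j)
    simpa using mul_self_eq_zero.mp h3
  rw [hEdef] at hE0
  exact sub_eq_zero.mp hE0
end
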